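/- A graph G with m edges is harmonic if and only if λ₁ = (Σ_{v∈V(G)} d_v²)/(2m) and G has at most two main eigenvalues. -/

import Mathlib

open Matrix Finset Polynomial

variable {V : Type*} [Fintype V] [DecidableEq V]

/-- `μ` is an eigenvalue of the adjacency matrix of `G`. -/
def SimpleGraph.IsEigenvalue (G : SimpleGraph V) [DecidableRel G.Adj] (μ : ℝ) : Prop :=
  ∃ x : V → ℝ, x ≠ 0 ∧ (G.adjMatrix ℝ) *ᵥ x = μ • x

/-- `μ` is a main eigenvalue: some associated eigenvector is not orthogonal
to the all-ones vector. -/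
def SimpleGraph.IsMainEigenvalue (G : SimpleGraph V) [DecidableRel G.Adj] (μ : ℝ) : Prop :=
  ∃ x : V → ℝ, x ≠ 0 ∧ (G.adjMatrix ℝ) *ᵥ x = μ • x ∧ ∑ v, x v ≠ 0

/-- `μ` is a non-main eigenvalue: it is an eigenvalue whose eigenspace is
orthogonal to the all-ones vector. -/
def SimpleGraph.IsNonMainEigenvalue (G : SimpleGraph V) [DecidableRel G.Adj] (μ : ℝ) : Prop :=
  G.IsEigenvalue μ ∧ ¬ G.IsMainEigenvalue μ

/-- The multiplicity of `μ` as an eigenvalue of `G` (as a root of the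
characteristic polynomial of the adjacency matrix). -/
noncomputable def SimpleGraph.eigMult (G : SimpleGraph V) [DecidableRel G.Adj] (μ : ℝ) : ℕ :=
  ((G.adjMatrix ℝ).charpoly).rootMultiplicity μ

/-- `G` is harmonic: its degree vector is an eigenvector of the adjacency matrix
associated with a positive integer eigenvalue. -/
def SimpleGraph.IsHarmonic (G : SimpleGraph V) [DecidableRel G.Adj] : Prop :=
  ∃ ℓ : ℕ, 0 < ℓ ∧
    (G.adjMatrix ℝ) *ᵥ (fun v => (G.degree v : ℝ)) = (ℓ : ℝ) • (fun v => (G.degree v : ℝ))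

/-!
If `A d = ℓ d`, then for any eigenvector `x` of `A` with eigenvalue `μ` we have
`d ⬝ x = (A 1) ⬝ x = μ (1 ⬝ x)` and `ℓ (d ⬝ x) = μ (d ⬝ x)`, so every main eigenvalue is `ℓ` or `0`;
by Perron–Frobenius `λ₁` is main, and `λ₁ ≥ ℓ > 0`, so `λ₁ = ℓ`; and `Σ d_v² = d ⬝ A 1 = ℓ · 2m`.

Conversely, expand `1 = Σ cₖ eₖ` in an orthonormal eigenbasis; `cₖ ≠ 0` only if `μₖ` is main,
i.e. `μₖ = λ₁` or `μₖ = b` for a single other value `b`. The hypothesis `λ₁ (1 ⬝ A 1) = A 1 ⬝ A 1`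
reads `Σ cₖ² μₖ (λ₁ - μₖ) = 0`, i.e. `b (λ₁ - b) Σ_{μₖ = b ≠ λ₁} cₖ² = 0`, which forces
`cₖ μₖ (μₖ - λ₁) = 0` for all `k`, i.e. `A d = A² 1 = λ₁ A 1 = λ₁ d`. Finally `λ₁ = Σ d_v² / 2m`
is rational and an algebraic integer, hence a positive integer.
-/

theorem Matrix.dotProduct_mulVec_le_abs {n : Type*} [Fintype n] {A : Matrix n n ℝ}
    (hA : ∀ i j, 0 ≤ A i j) (x : n → ℝ) : x ⬝ᵥ (A *ᵥ x) ≤ |x| ⬝ᵥ (A *ᵥ |x|) := by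
  simp only [dotProduct, mulVec, mul_sum]
  refine sum_le_sum fun i _ => sum_le_sum fun j _ => ?_
  calc x i * (A i j * x j) ≤ |x i * (A i j * x j)| := le_abs_self _
    _ = |x| i * (A i j * |x| j) := by simp [abs_mul, abs_of_nonneg (hA i j)]

theorem IsIntegral.exists_nat_eq_of_eq_ratCast {x : ℝ} (hx : IsIntegral ℤ x) {q : ℚ}
    (hq : x = q) (hpos : 0 < x) : ∃ ℓ : ℕ, 0 < ℓ ∧ x = ℓ := by
  have hqint : IsIntegral ℤ q := by
    rwa [← isIntegral_algebraMap_iff (algebraMap ℚ ℝ).injective, eq_ratCast, ← hq]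
  obtain ⟨z, hz⟩ := IsIntegrallyClosed.isIntegral_iff.1 hqint
  have hxz : x = z := by rw [hq, ← hz]; simp
  have hz0 : 0 < z := by exact_mod_cast hxz ▸ hpos
  exact ⟨z.toNat, by omega, by rw [hxz]; exact_mod_cast (Int.toNat_of_nonneg hz0.le).symm⟩

namespace Matrix.IsHermitian

variable {n : Type*} [Fintype n] {A : Matrix n n ℝ}

theorem mulVec_dotProduct (hA : A.IsHermitian) (x y : n → ℝ) :
    (A *ᵥ x) ⬝ᵥ y = x ⬝ᵥ (A *ᵥ y) := by
  rw [dotProduct_mulVec, ← mulVec_transpose, ← conjTranspose_eq_transpose_of_trivial, hA.eq,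
    dotProduct_comm]

variable [DecidableEq n] (hA : A.IsHermitian)

noncomputable def eigenCoord (x : n → ℝ) (k : n) : ℝ := ⇑(hA.eigenvectorBasis k) ⬝ᵥ x

theorem eigenCoord_smul (r : ℝ) (x : n → ℝ) (k : n) :
    hA.eigenCoord (r • x) k = r * hA.eigenCoord x k :=
  dotProduct_smul r _ x

theorem eigenCoord_mulVec (x : n → ℝ) (k : n) :
    hA.eigenCoord (A *ᵥ x) k = hA.eigenvalues k * hA.eigenCoord x k := by
  rw [eigenCoord, ← hA.mulVec_dotProduct, mulVec_eigenvectorBasis, smul_dotProduct, smul_eq_mul,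
    eigenCoord]

theorem sum_eigenCoord_smul (x : n → ℝ) :
    ∑ k, hA.eigenCoord x k • ⇑(hA.eigenvectorBasis k) = x := by
  have := congrArg WithLp.ofLp (hA.eigenvectorBasis.sum_repr' (WithLp.toLp 2 x))
  simpa [EuclideanSpace.inner_eq_star_dotProduct, dotProduct_comm, eigenCoord] using this

theorem ext_eigenCoord {x y : n → ℝ} (h : ∀ k, hA.eigenCoord x k = hA.eigenCoord y k) :
    x = y := by
  rw [← hA.sum_eigenCoord_smul x, ← hA.sum_eigenCoord_smul y]
  simp only [h]

theorem dotProduct_eq_sum_eigenCoord (x y : n → ℝ) :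
    x ⬝ᵥ y = ∑ k, hA.eigenCoord x k * hA.eigenCoord y k := by
  have := hA.eigenvectorBasis.sum_inner_mul_inner (WithLp.toLp 2 x) (WithLp.toLp 2 y)
  simpa [EuclideanSpace.inner_eq_star_dotProduct, eigenCoord, dotProduct_comm] using this.symm

theorem mulVec_eq_smul_of_le_dotProduct_mulVec {lam : ℝ} (hle : ∀ k, hA.eigenvalues k ≤ lam)
    {x : n → ℝ} (hx : lam * (x ⬝ᵥ x) ≤ x ⬝ᵥ (A *ᵥ x)) : A *ᵥ x = lam • x := by
  set c := hA.eigenCoord x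
  have hnonneg : ∀ k ∈ univ, 0 ≤ (lam - hA.eigenvalues k) * c k ^ 2 :=
    fun k _ => mul_nonneg (sub_nonneg.2 (hle k)) (sq_nonneg _)
  have hsum : ∑ k, (lam - hA.eigenvalues k) * c k ^ 2 = 0 := by
    refine le_antisymm ?_ (sum_nonneg hnonneg)
    have : ∑ k, (lam - hA.eigenvalues k) * c k ^ 2 = lam * (x ⬝ᵥ x) - x ⬝ᵥ (A *ᵥ x) := by
      simp only [hA.dotProduct_eq_sum_eigenCoord x, hA.eigenCoord_mulVec, mul_sum,
        ← sum_sub_distrib]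
      exact sum_congr rfl fun k _ => by ring
    linarith
  refine hA.ext_eigenCoord fun k => ?_
  have hk := (sum_eq_zero_iff_of_nonneg hnonneg).1 hsum k (mem_univ k)
  rw [hA.eigenCoord_mulVec, hA.eigenCoord_smul]
  change hA.eigenvalues k * c k = lam * c k
  rcases mul_eq_zero.1 hk with h | h
  · rw [sub_eq_zero.1 h]
  · rw [pow_eq_zero_iff two_ne_zero |>.1 h, mul_zero, mul_zero]

theorem exists_mulVec_eq_smul_dotProduct_ne_zero {u : n → ℝ} {k : n}
    (hk : hA.eigenCoord u k ≠ 0) : ∃ x, A *ᵥ x = hA.eigenvalues k • x ∧ u ⬝ᵥ x ≠ 0 := by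
  set s := univ.filter fun j => hA.eigenvalues j = hA.eigenvalues k
  refine ⟨∑ j ∈ s, hA.eigenCoord u j • ⇑(hA.eigenvectorBasis j), ?_, ?_⟩
  · simp only [mulVec_sum, mulVec_smul, mulVec_eigenvectorBasis, smul_sum]
    refine sum_congr rfl fun j hj => ?_
    rw [(mem_filter.1 hj).2, smul_smul, smul_smul, mul_comm]
  · rw [dotProduct_sum]
    refine ne_of_gt (sum_pos' (fun j _ => ?_) ⟨k, mem_filter.2 ⟨mem_univ k, rfl⟩, ?_⟩)
    · rw [dotProduct_smul, smul_eq_mul, dotProduct_comm]; exact mul_self_nonneg _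
    · rw [dotProduct_smul, smul_eq_mul, dotProduct_comm]; exact mul_self_pos.2 hk

theorem mulVec_mulVec_eq_smul_of_eigenCoord {u : n → ℝ} {lam b : ℝ}
    (hmain : ∀ k, hA.eigenCoord u k ≠ 0 → hA.eigenvalues k = lam ∨ hA.eigenvalues k = b)
    (h : lam * (u ⬝ᵥ (A *ᵥ u)) = (A *ᵥ u) ⬝ᵥ (A *ᵥ u)) :
    A *ᵥ (A *ᵥ u) = lam • (A *ᵥ u) := by
  set c := hA.eigenCoord u
  set μ := hA.eigenvalues
  set w : n → ℝ := fun k => if μ k = lam then 0 else c k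
  have hw : ∀ k, c k * μ k * (lam - μ k) = b * (lam - b) * w k := by
    intro k
    by_cases hl : μ k = lam
    · simp [w, hl]
    by_cases hc : c k = 0
    · simp [w, hc]
    · simp only [w, if_neg hl, (hmain k hc).resolve_left hl]; ring
  have hsum : b * (lam - b) * ∑ k, w k ^ 2 = 0 := by
    have hcw (k : n) : c k * w k = w k ^ 2 := by by_cases hl : μ k = lam <;> simp [w, hl, sq]
    calc b * (lam - b) * ∑ k, w k ^ 2 = ∑ k, c k * (c k * μ k * (lam - μ k)) := by
          simp only [hw, mul_sum, ← hcw]; exact sum_congr rfl fun k _ => by ring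
      _ = lam * (u ⬝ᵥ (A *ᵥ u)) - (A *ᵥ u) ⬝ᵥ (A *ᵥ u) := by
          simp only [hA.dotProduct_eq_sum_eigenCoord _ (A *ᵥ u), hA.eigenCoord_mulVec, mul_sum,
            ← sum_sub_distrib]
          exact sum_congr rfl fun k _ => by ring
      _ = 0 := sub_eq_zero.2 h
  have hzero (k : n) : b * (lam - b) * w k = 0 := by
    rcases mul_eq_zero.1 hsum with ht | hw0
    · rw [ht, zero_mul]
    · have hwk := (sum_eq_zero_iff_of_nonneg fun j _ => sq_nonneg (w j)).1 hw0 k (mem_univ k)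
      rw [pow_eq_zero_iff two_ne_zero |>.1 hwk, mul_zero]
  refine hA.ext_eigenCoord fun k => ?_
  rw [hA.eigenCoord_mulVec, hA.eigenCoord_mulVec, hA.eigenCoord_smul, hA.eigenCoord_mulVec]
  linear_combination (-1 : ℝ) * (hw k).trans (hzero k)

end Matrix.IsHermitian

namespace SimpleGraph

variable (G : SimpleGraph V) [DecidableRel G.Adj]

omit [DecidableEq V] in
theorem adjMatrix_mulVec_one : G.adjMatrix ℝ *ᵥ 1 = fun v => (G.degree v : ℝ) := by
  funext v
  simp

omit [DecidableEq V] in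
theorem adjMatrix_eq_zero_of_edgeFinset_eq_empty {α : Type*} [Zero α] [One α]
    (h : G.edgeFinset = ∅) : G.adjMatrix α = 0 := by
  ext v w
  have : ¬ G.Adj v w := fun hvw => by
    simpa [h] using (mem_edgeFinset.2 hvw : s(v, w) ∈ G.edgeFinset)
  simp [this]

theorem isEigenvalue_eigenvalues (k : V) :
    G.IsEigenvalue ((G.isHermitian_adjMatrix ℝ).eigenvalues k) :=
  ⟨_, (WithLp.ofLp_eq_zero 2).ne.2
      ((G.isHermitian_adjMatrix ℝ).eigenvectorBasis.orthonormal.ne_zero k),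
    (G.isHermitian_adjMatrix ℝ).mulVec_eigenvectorBasis k⟩

omit [DecidableEq V] in
theorem IsEigenvalue.eq_zero_of_edgeFinset_eq_empty {G : SimpleGraph V} [DecidableRel G.Adj]
    {μ : ℝ} (h : G.edgeFinset = ∅) (hμ : G.IsEigenvalue μ) : μ = 0 := by
  obtain ⟨x, hx0, hx⟩ := hμ
  rw [G.adjMatrix_eq_zero_of_edgeFinset_eq_empty h, zero_mulVec, eq_comm, smul_eq_zero] at hx
  exact hx.resolve_right hx0

theorem IsEigenvalue.isIntegral {G : SimpleGraph V} [DecidableRel G.Adj] {μ : ℝ}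
    (h : G.IsEigenvalue μ) : IsIntegral ℤ μ := by
  obtain ⟨x, hx0, hx⟩ := h
  have hroot : (G.adjMatrix ℝ).charpoly.IsRoot μ := by
    rw [← mem_spectrum_iff_isRoot_charpoly, ← spectrum_toLin']
    exact Module.End.HasEigenvalue.mem_spectrum
      (Module.End.hasEigenvalue_of_hasEigenvector ⟨Module.End.mem_eigenspace_iff.2 hx, hx0⟩)
  refine ⟨(G.adjMatrix ℤ).charpoly, charpoly_monic _, ?_⟩
  have hmap : (G.adjMatrix ℤ).map (algebraMap ℤ ℝ) = G.adjMatrix ℝ := by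
    ext v w
    by_cases hvw : G.Adj v w <;> simp [hvw]
  rwa [← Polynomial.eval_map, ← Matrix.charpoly_map, hmap]

theorem isMainEigenvalue_of_isGreatest {lam : ℝ} (h : IsGreatest {μ | G.IsEigenvalue μ} lam) :
    G.IsMainEigenvalue lam := by
  obtain ⟨x, hx0, hx⟩ := h.1
  have habs0 : |x| ≠ 0 := fun h0 => hx0 (funext fun v => abs_eq_zero.1 (congrFun h0 v))
  refine ⟨|x|, habs0, ?_, ?_⟩
  · -- `A` has nonnegative entries, so `|x|` has Rayleigh quotient at least that of `x`, i.e. `lam`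
    refine (G.isHermitian_adjMatrix ℝ).mulVec_eq_smul_of_le_dotProduct_mulVec
      (fun k => h.2 (G.isEigenvalue_eigenvalues k)) ?_
    calc lam * (|x| ⬝ᵥ |x|) = x ⬝ᵥ (G.adjMatrix ℝ *ᵥ x) := by
          rw [hx, dotProduct_smul, smul_eq_mul]
          simp only [dotProduct, Pi.abs_apply, abs_mul_abs_self]
      _ ≤ |x| ⬝ᵥ (G.adjMatrix ℝ *ᵥ |x|) :=
          dotProduct_mulVec_le_abs (fun v w => by by_cases hvw : G.Adj v w <;> simp [hvw]) x
  · obtain ⟨v, hv⟩ := Function.ne_iff.1 habs0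
    exact ne_of_gt (sum_pos' (fun w _ => abs_nonneg (x w))
      ⟨v, mem_univ v, lt_of_le_of_ne (abs_nonneg _) (Ne.symm hv)⟩)

theorem isMainEigenvalue_eigenvalues {k : V}
    (hk : (G.isHermitian_adjMatrix ℝ).eigenCoord 1 k ≠ 0) :
    G.IsMainEigenvalue ((G.isHermitian_adjMatrix ℝ).eigenvalues k) := by
  obtain ⟨x, hx, hsum⟩ :=
    (G.isHermitian_adjMatrix ℝ).exists_mulVec_eq_smul_dotProduct_ne_zero hk
  rw [one_dotProduct] at hsum
  exact ⟨x, fun h0 => hsum (by simp [h0]), hx, hsum⟩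

omit [DecidableEq V] in
theorem IsMainEigenvalue.eq_or_eq_zero {G : SimpleGraph V} [DecidableRel G.Adj] {r μ : ℝ}
    (hd : G.adjMatrix ℝ *ᵥ (fun v => (G.degree v : ℝ)) = r • fun v => (G.degree v : ℝ))
    (hμ : G.IsMainEigenvalue μ) : μ = r ∨ μ = 0 := by
  obtain ⟨x, -, hx, hsum⟩ := hμ
  have hA := G.isHermitian_adjMatrix ℝ
  set d : V → ℝ := fun v => (G.degree v : ℝ)
  have hdx : d ⬝ᵥ x = μ * ∑ v, x v := by
    rw [← show G.adjMatrix ℝ *ᵥ 1 = d from G.adjMatrix_mulVec_one, hA.mulVec_dotProduct, hx,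
      dotProduct_smul, one_dotProduct, smul_eq_mul]
  have hrμ : r * (d ⬝ᵥ x) = μ * (d ⬝ᵥ x) := by
    rw [← smul_eq_mul, ← smul_dotProduct, ← hd, hA.mulVec_dotProduct, hx, dotProduct_smul,
      smul_eq_mul]
  rcases eq_or_ne (d ⬝ᵥ x) 0 with h0 | h0
  · exact Or.inr ((mul_eq_zero.1 (hdx ▸ h0)).resolve_right hsum)
  · exact Or.inl (mul_right_cancel₀ h0 hrμ).symm

theorem eq_of_isGreatest_of_adjMatrix_mulVec_degree {ℓ lam : ℝ} (hℓ : 0 < ℓ)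
    (hE : 0 < #G.edgeFinset)
    (hd : G.adjMatrix ℝ *ᵥ (fun v => (G.degree v : ℝ)) = ℓ • fun v => (G.degree v : ℝ))
    (h : IsGreatest {μ | G.IsEigenvalue μ} lam) : lam = ℓ := by
  obtain ⟨v, -, hv⟩ := exists_ne_zero_of_sum_ne_zero
    (G.sum_degrees_eq_twice_card_edges.trans_ne (by positivity))
  have hle : ℓ ≤ lam := h.2 ⟨_, fun h0 => hv (by simpa using congrFun h0 v), hd⟩
  exact ((G.isMainEigenvalue_of_isGreatest h).eq_or_eq_zero hd).resolve_right (by linarith)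

omit [DecidableEq V] in
theorem sum_degree_sq_eq {r : ℝ}
    (hd : G.adjMatrix ℝ *ᵥ (fun v => (G.degree v : ℝ)) = r • fun v => (G.degree v : ℝ)) :
    ∑ v, (G.degree v : ℝ) ^ 2 = r * (2 * #G.edgeFinset) := by
  have hsum : ∑ v, (G.degree v : ℝ) = 2 * #G.edgeFinset := by
    exact_mod_cast G.sum_degrees_eq_twice_card_edges
  calc ∑ v, (G.degree v : ℝ) ^ 2 = (G.adjMatrix ℝ *ᵥ 1) ⬝ᵥ fun v => (G.degree v : ℝ) := by
        rw [adjMatrix_mulVec_one]; simp only [dotProduct, sq]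
    _ = r * (2 * #G.edgeFinset) := by
        rw [(G.isHermitian_adjMatrix ℝ).mulVec_dotProduct, hd, dotProduct_smul, one_dotProduct,
          hsum, smul_eq_mul]

omit [DecidableEq V] in
theorem sum_degree_le_sum_degree_sq : ∑ v, (G.degree v : ℝ) ≤ ∑ v, (G.degree v : ℝ) ^ 2 :=
  sum_le_sum fun v _ => by exact_mod_cast Nat.le_self_pow two_ne_zero _

theorem adjMatrix_mulVec_degree_eq_smul {lam b : ℝ}
    (hmain : ∀ μ, G.IsMainEigenvalue μ → μ = lam ∨ μ = b)
    (h : lam * ∑ v, (G.degree v : ℝ) = ∑ v, (G.degree v : ℝ) ^ 2) :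
    G.adjMatrix ℝ *ᵥ (fun v => (G.degree v : ℝ)) = lam • fun v => (G.degree v : ℝ) := by
  rw [← adjMatrix_mulVec_one]
  refine (G.isHermitian_adjMatrix ℝ).mulVec_mulVec_eq_smul_of_eigenCoord
    (fun k hk => hmain _ (G.isMainEigenvalue_eigenvalues hk)) ?_
  simpa [adjMatrix_mulVec_one, dotProduct, sq] using h

omit [DecidableEq V] in
theorem isHarmonic_of_edgeFinset_eq_empty (h : G.edgeFinset = ∅) : G.IsHarmonic := by
  refine ⟨1, one_pos, ?_⟩
  rw [← G.adjMatrix_mulVec_one, G.adjMatrix_eq_zero_of_edgeFinset_eq_empty h, zero_mulVec,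
    zero_mulVec, smul_zero]

end SimpleGraph

theorem harmonic_iff_index_and_two_main (G : SimpleGraph V) [DecidableRel G.Adj]
    (m : ℕ) (hm : G.edgeFinset.card = m)
    (lam1 : ℝ) (h1 : IsGreatest {μ | G.IsEigenvalue μ} lam1) :
    G.IsHarmonic ↔
      (lam1 = (∑ v, (G.degree v : ℝ) ^ 2) / (2 * m) ∧
        ∃ a b : ℝ, ∀ μ, G.IsMainEigenvalue μ → μ = a ∨ μ = b) := by
  rcases Nat.eq_zero_or_pos m with rfl | hm0
  · have hE := card_eq_zero.1 hm
    rw [Nat.cast_zero, mul_zero, div_zero]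
    exact iff_of_true (G.isHarmonic_of_edgeFinset_eq_empty hE)
      ⟨h1.1.eq_zero_of_edgeFinset_eq_empty hE, 0, 0, fun μ ⟨x, hx0, hx, _⟩ =>
        Or.inl (SimpleGraph.IsEigenvalue.eq_zero_of_edgeFinset_eq_empty hE ⟨x, hx0, hx⟩)⟩
  have hsum : ∑ v, (G.degree v : ℝ) = 2 * m := by
    rw [← hm]; exact_mod_cast G.sum_degrees_eq_twice_card_edges
  constructor
  · rintro ⟨ℓ, hℓ, hd⟩
    have hlam := G.eq_of_isGreatest_of_adjMatrix_mulVec_degree (by positivity) (hm ▸ hm0) hd h1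
    refine ⟨?_, ℓ, 0, fun μ hμ => hμ.eq_or_eq_zero hd⟩
    rw [G.sum_degree_sq_eq hd, hm, hlam]
    field_simp
  · rintro ⟨hlam, a, b, hab⟩
    obtain ⟨b', hb'⟩ : ∃ b', ∀ μ, G.IsMainEigenvalue μ → μ = lam1 ∨ μ = b' := by
      rcases hab _ (G.isMainEigenvalue_of_isGreatest h1) with rfl | rfl
      exacts [⟨b, hab⟩, ⟨a, fun μ hμ => (hab μ hμ).symm⟩]
    have hd := G.adjMatrix_mulVec_degree_eq_smul hb' (by rw [hsum, hlam]; field_simp)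
    have hpos : 0 < lam1 := by
      rw [hlam]
      have : (0 : ℝ) < m := Nat.cast_pos.2 hm0
      exact div_pos (by linarith [G.sum_degree_le_sum_degree_sq]) (by positivity)
    obtain ⟨ℓ, hℓ, rfl⟩ := h1.1.isIntegral.exists_nat_eq_of_eq_ratCast
      (q := (∑ v, G.degree v ^ 2 : ℕ) / (2 * m : ℕ)) (by rw [hlam]; push_cast; rfl) hpos
    exact ⟨ℓ, hℓ, hd⟩
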